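/- Let S be a commutative semigroup with zero and G = Γ(S). Suppose there exist adjacent vertices a, b, a vertex s with N(s) = {a,b}, and a vertex z with d(s,z) = 3. If a is an internal vertex, b is not an internal vertex, and b² ≠ 0, then S \ C(a,b) is a sub-semigroup of S. -/

import Mathlib

/-!
Let `c = x * y` have neighbourhood `{a, b}`, so that every nonzero annihilator of `c` is `c`, `a`
or `b`. A vertex `w` on a geodesic from `s` to `z` annihilates `a` but not `c`, and the end vertex
`e` next to `b` annihilates `b` but not `c`; hence `c` is a multiple of neither `a` nor `b`, so
`x, y ∉ {a, b}`. Every neighbour of `x` annihilates `c`, so `N(x) ⊆ {a, b}`; as the neighbours of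
the internal vertex `a` are not end vertices, `x * a = 0` would force `x ∈ C(a, b)`, and likewise
for `y`. Finally `x * a` annihilates `c`, and each of `x * a = c`, `x * a = a`, `x * a = b`
contradicts one of `c ∉ a S`, `y * a ≠ 0`, `b * b ≠ 0`.
-/

def IsZeroDivisorElem {S : Type*} [Mul S] [Zero S] (x : S) : Prop :=
  x ≠ 0 ∧ ∃ y : S, y ≠ 0 ∧ x * y = 0

/-- The zero-divisor graph Γ(S). -/
def zdGraph (S : Type*) [CommSemigroup S] [Zero S] :
    SimpleGraph {x : S // IsZeroDivisorElem x} where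
  Adj a b := a ≠ b ∧ (a : S) * (b : S) = 0
  symm := by
    refine ⟨?_⟩
    rintro a b ⟨h1, h2⟩
    exact ⟨h1.symm, by rwa [mul_comm] at h2⟩
  loopless := by refine ⟨?_⟩; rintro a ⟨h, _⟩; exact h rfl

def IsEndVertex {V : Type*} (G : SimpleGraph V) (v : V) : Prop :=
  ∃! u, G.Adj v u

def IsInternal {V : Type*} (G : SimpleGraph V) (v : V) : Prop :=
  (∃ u, G.Adj v u) ∧ ¬ IsEndVertex G v ∧ ∀ u, G.Adj v u → ¬ IsEndVertex G u

/-- C(a,b), as a subset of S. -/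
def cSet (S : Type*) [CommSemigroup S] [Zero S]
    (a b : {x : S // IsZeroDivisorElem x}) : Set S :=
  {x : S | ∃ h : IsZeroDivisorElem x, (zdGraph S).neighborSet ⟨x, h⟩ = {a, b}}

/-- The set T_a of end vertices adjacent to a, as a subset of S. -/
def tSet (S : Type*) [CommSemigroup S] [Zero S]
    (a : {x : S // IsZeroDivisorElem x}) : Set S :=
  {x : S | ∃ h : IsZeroDivisorElem x,
    (zdGraph S).Adj ⟨x, h⟩ a ∧ IsEndVertex (zdGraph S) ⟨x, h⟩}

namespace SimpleGraph

variable {V : Type*} {G : SimpleGraph V}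

lemma adj_left_of_neighborSet_eq {v a b : V} (h : G.neighborSet v = {a, b}) : G.Adj v a := by
  rw [← mem_neighborSet, h]
  exact Set.mem_insert a {b}

lemma adj_right_of_neighborSet_eq {v a b : V} (h : G.neighborSet v = {a, b}) : G.Adj v b := by
  rw [← mem_neighborSet, h]
  exact Set.mem_insert_of_mem a rfl

lemma not_isEndVertex_of_adj_of_adj {v u w : V} (hu : G.Adj v u) (hw : G.Adj v w)
    (huw : u ≠ w) : ¬ IsEndVertex G v := by
  rintro ⟨t, -, ht⟩
  exact huw ((ht u hu).trans (ht w hw).symm)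

lemma exists_adj_isEndVertex_of_not_isInternal {v u w : V} (hu : G.Adj v u) (hw : G.Adj v w)
    (huw : u ≠ w) (hv : ¬ IsInternal G v) : ∃ e, G.Adj v e ∧ IsEndVertex G e := by
  by_contra! h
  exact hv ⟨⟨u, hu⟩, not_isEndVertex_of_adj_of_adj hu hw huw, h⟩

lemma neighborSet_eq_pair_of_subset {v a b : V} (hsub : G.neighborSet v ⊆ {a, b})
    (ha : G.Adj v a) (hv : ¬ IsEndVertex G v) : G.neighborSet v = {a, b} := by
  refine hsub.antisymm (Set.insert_subset ha (Set.singleton_subset_iff.2 ?_))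
  by_contra hb
  refine hv ⟨a, ha, fun t ht => ?_⟩
  rcases hsub ht with rfl | rfl
  · rfl
  · exact absurd ht hb

lemma dist_le_length_add_one {s u z : V} (p : G.Walk s u) (h : u = z ∨ G.Adj u z) :
    G.dist s z ≤ p.length + 1 := by
  rcases h with rfl | h
  · exact (dist_le p).trans (Nat.le_succ _)
  · simpa using dist_le (p.concat h)

lemma exists_adj_adj_adj_of_dist_eq_three {s z : V} (hd : G.dist s z = 3) :
    ∃ u u', G.Adj s u ∧ G.Adj u u' ∧ G.Adj u' z := by
  obtain ⟨p, hp⟩ := exists_walk_of_dist_ne_zero (G := G) (u := s) (v := z) (by omega)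
  rw [hd] at hp
  refine ⟨p.getVert 1, p.getVert 2, ?_, p.adj_getVert_succ (by omega), ?_⟩
  · simpa using p.adj_getVert_succ (i := 0) (by omega)
  · simpa [← hp, Walk.getVert_length] using p.adj_getVert_succ (i := 2) (by omega)

end SimpleGraph

open SimpleGraph

namespace zdGraph

variable {S : Type*} [CommSemigroup S] [Zero S]

local notation "V" => {x : S // IsZeroDivisorElem x}

lemma eq_or_adj_of_mul_eq_zero {u v : V} (h : (u : S) * v = 0) : u = v ∨ (zdGraph S).Adj u v := by
  by_cases huv : u = v
  · exact Or.inl huv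
  · exact Or.inr ⟨huv, h⟩

lemma mem_of_mul_eq_zero {v a b : V} (hN : (zdGraph S).neighborSet v = {a, b}) {w : S}
    (hw : w ≠ 0) (hwv : w * v = 0) : w = v ∨ w = a ∨ w = b := by
  let W : V := ⟨w, hw, v, v.2.1, hwv⟩
  rcases eq_or_adj_of_mul_eq_zero (u := W) hwv with h | h
  · exact Or.inl (congrArg Subtype.val h)
  · have hW : W ∈ ({a, b} : Set V) := hN ▸ h.symm
    simp only [Set.mem_insert_iff, Set.mem_singleton_iff, Subtype.ext_iff] at hW
    exact Or.inr hW

lemma eq_zero_of_mul_eq_zero_of_mul_eq_zero {v a b : V} (hN : (zdGraph S).neighborSet v = {a, b})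
    {t w : S} (hvt : (v : S) * t ≠ 0) (hat : (a : S) * t ≠ 0) (hbt : (b : S) * t ≠ 0)
    (hwv : w * v = 0) (hwt : w * t = 0) : w = 0 := by
  by_contra hw
  rcases mem_of_mul_eq_zero hN hw hwv with rfl | rfl | rfl
  · exact hvt hwt
  · exact hat hwt
  · exact hbt hwt

lemma mul_ne_zero_of_neighborSet_eq {c a b z : V} (hN : (zdGraph S).neighborSet c = {a, b})
    (hab : (zdGraph S).Adj a b) (haz : (a : S) * z ≠ 0) (hbz : (b : S) * z ≠ 0) :
    (c : S) * z ≠ 0 := by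
  intro h
  rcases mem_of_mul_eq_zero hN z.2.1 (by rwa [mul_comm]) with h | h | h
  · exact haz (by rw [h, mul_comm]; exact (adj_left_of_neighborSet_eq hN).2)
  · exact hbz (by rw [h, mul_comm]; exact hab.2)
  · exact haz (by rw [h]; exact hab.2)

lemma mul_ne_zero_of_length_add_one_lt_dist {s u z : V} (p : (zdGraph S).Walk s u)
    (hlt : p.length + 1 < (zdGraph S).dist s z) : (u : S) * z ≠ 0 := fun h =>
  (dist_le_length_add_one p (eq_or_adj_of_mul_eq_zero h)).not_gt hlt

lemma mul_ne_zero_of_dist_eq_three {s a b z : V} (hs : (zdGraph S).neighborSet s = {a, b})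
    (hd : (zdGraph S).dist s z = 3) :
    (s : S) * z ≠ 0 ∧ (a : S) * z ≠ 0 ∧ (b : S) * z ≠ 0 :=
  ⟨mul_ne_zero_of_length_add_one_lt_dist Walk.nil (by simp [hd]),
    mul_ne_zero_of_length_add_one_lt_dist (adj_left_of_neighborSet_eq hs).toWalk (by simp [hd]),
    mul_ne_zero_of_length_add_one_lt_dist (adj_right_of_neighborSet_eq hs).toWalk (by simp [hd])⟩

variable (hz : ∀ x : S, 0 * x = 0)
include hz

lemma exists_mul_eq_zero_of_dist_eq_three {s a b z : V} (hs : (zdGraph S).neighborSet s = {a, b})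
    (hd : (zdGraph S).dist s z = 3) : ∃ w : V, (w : S) * a = 0 ∧ (w : S) * z = 0 := by
  obtain ⟨u, w, hsu, huw, hwz⟩ := exists_adj_adj_adj_of_dist_eq_three hd
  refine ⟨w, ?_, hwz.2⟩
  rcases (hs ▸ hsu : u ∈ ({a, b} : Set V)) with rfl | rfl
  · rw [mul_comm]
    exact huw.2
  · -- `a * w` annihilates both `s` and `z`, which no nonzero element does
    obtain ⟨hsz, haz, hbz⟩ := mul_ne_zero_of_dist_eq_three hs hd
    rw [mul_comm]
    refine eq_zero_of_mul_eq_zero_of_mul_eq_zero hs hsz haz hbz ?_ ?_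
    · rw [show (a : S) * w * s = s * a * w by ac_rfl, (adj_left_of_neighborSet_eq hs).2, hz]
    · rw [show (a : S) * w * z = w * z * a by ac_rfl, hwz.2, hz]

lemma mul_ne_of_dist_eq_three {s a b z c : V} (hab : (zdGraph S).Adj a b)
    (hs : (zdGraph S).neighborSet s = {a, b}) (hd : (zdGraph S).dist s z = 3)
    (hN : (zdGraph S).neighborSet c = {a, b}) (m : S) : (a : S) * m ≠ c := by
  obtain ⟨-, haz, hbz⟩ := mul_ne_zero_of_dist_eq_three hs hd
  obtain ⟨w, hwa, hwz⟩ := exists_mul_eq_zero_of_dist_eq_three hz hs hd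
  intro h
  refine w.2.1 (eq_zero_of_mul_eq_zero_of_mul_eq_zero hN
    (mul_ne_zero_of_neighborSet_eq hN hab haz hbz) haz hbz ?_ hwz)
  rw [← h, ← mul_assoc, hwa, hz]

lemma mul_ne_of_adj_isEndVertex {a b c e : V} (hab : (zdGraph S).Adj a b)
    (ha : ¬ IsEndVertex (zdGraph S) a) (hbe : (zdGraph S).Adj b e)
    (he : IsEndVertex (zdGraph S) e) (hN : (zdGraph S).neighborSet c = {a, b}) (m : S) :
    (b : S) * m ≠ c := by
  have hec : (e : S) * c ≠ 0 := by
    intro h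
    rcases mem_of_mul_eq_zero hN e.2.1 h with h | h | h
    · rw [Subtype.ext h] at he
      exact not_isEndVertex_of_adj_of_adj (adj_left_of_neighborSet_eq hN)
        (adj_right_of_neighborSet_eq hN) hab.ne he
    · exact ha (Subtype.ext h ▸ he)
    · exact hbe.ne (Subtype.ext h).symm
  intro h
  exact hec (by rw [← h, ← mul_assoc, mul_comm (e : S), hbe.2, hz])

lemma neighborSet_subset_of_mul_eq {a b c X : V} (hN : (zdGraph S).neighborSet c = {a, b})
    {y : S} (hXy : (X : S) * y = c) (hXa : X ≠ a) (hXb : X ≠ b) :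
    (zdGraph S).neighborSet X ⊆ {a, b} := by
  intro t ht
  have htc : (t : S) * c = 0 := by
    rw [← hXy, ← mul_assoc, mul_comm (t : S), ht.2, hz]
  rcases mem_of_mul_eq_zero hN t.2.1 htc with h | h | h
  · have hcX : (zdGraph S).Adj c X := Subtype.ext h ▸ ht.symm
    have hX : X ∈ ({a, b} : Set V) := hN ▸ hcX
    rcases hX with h | h
    · exact absurd h hXa
    · exact absurd h hXb
  · exact Or.inl (Subtype.ext h)
  · exact Or.inr (Subtype.ext h)

lemma mul_ne_zero_of_notMem_cSet {a b c : V} (hN : (zdGraph S).neighborSet c = {a, b})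
    (ha : ∀ u, (zdGraph S).Adj a u → ¬ IsEndVertex (zdGraph S) u) {x y : S} (hxy : x * y = c)
    (hx : x ∉ cSet S a b) (hx0 : x ≠ 0) (hxa : x ≠ a) (hxb : x ≠ b) : x * a ≠ 0 := by
  intro h
  let X : V := ⟨x, hx0, a, a.2.1, h⟩
  have hXa : (zdGraph S).Adj X a := ⟨fun e => hxa (congrArg Subtype.val e), h⟩
  have hsub := neighborSet_subset_of_mul_eq hz hN (X := X) hxy
    (fun e => hxa (congrArg Subtype.val e)) (fun e => hxb (congrArg Subtype.val e))
  exact hx ⟨X.2, neighborSet_eq_pair_of_subset hsub hXa (ha X hXa.symm)⟩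

end zdGraph

open zdGraph in
/-- Under condition (△), if a is internal, b is not internal and b² ≠ 0,
then S \ C(a,b) is a sub-semigroup of S. -/
theorem stmt10 {S : Type*} [CommSemigroup S] [Zero S] (hz : ∀ x : S, 0 * x = 0)
    (a b s z : {t : S // IsZeroDivisorElem t})
    (hab : (zdGraph S).Adj a b)
    (hs : (zdGraph S).neighborSet s = {a, b})
    (hd : (zdGraph S).dist s z = 3)
    (ha : IsInternal (zdGraph S) a) (hbint : ¬ IsInternal (zdGraph S) b)
    (hb2 : (b : S) * (b : S) ≠ 0) :
    ∀ x y : S, x ∉ cSet S a b → y ∉ cSet S a b → x * y ∉ cSet S a b := by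
  rintro x y hx hy ⟨hc, hN⟩
  have hA := mul_ne_of_dist_eq_three hz hab hs hd hN
  obtain ⟨e, hbe, he⟩ := exists_adj_isEndVertex_of_not_isInternal hab.symm
    (adj_right_of_neighborSet_eq hs).symm (adj_left_of_neighborSet_eq hs).ne.symm hbint
  have hB := mul_ne_of_adj_isEndVertex hz hab ha.2.1 hbe he hN
  have hxa : x * a ≠ 0 := mul_ne_zero_of_notMem_cSet hz hN ha.2.2 rfl hx
    (by rintro rfl; exact hc.1 (hz y)) (fun h => hA y (by rw [← h])) (fun h => hB y (by rw [← h]))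
  have hya : y * a ≠ 0 := mul_ne_zero_of_notMem_cSet hz hN ha.2.2 (mul_comm y x) hy
    (by rintro rfl; exact hc.1 (by rw [mul_comm, hz]))
    (fun h => hA x (by rw [← h, mul_comm])) (fun h => hB x (by rw [← h, mul_comm]))
  have hca : x * y * a = 0 := (adj_left_of_neighborSet_eq hN).2
  have hxac : x * a * (x * y) = 0 := by
    rw [show x * a * (x * y) = x * y * a * x by ac_rfl, hca, hz]
  rcases mem_of_mul_eq_zero hN hxa hxac with h | h | h
  · exact hA x (by rw [mul_comm]; exact h)
  · exact hya (by rw [← h, show y * (x * a) = x * y * a by ac_rfl, hca])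
  · have hxab : x * a * b = 0 := by rw [show x * a * b = a * b * x by ac_rfl, hab.2, hz]
    exact hb2 (by rwa [h] at hxab)
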